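/- For all integers k ≥ 2 and all integers q with 1 ≤ q ≤ 10^{k−2}, the graph G_{q,k} satisfies (1/m)·Σ_{h ∈ E(G_{q,k})} C_{G_{q,k}}(h) ≤ −3/10, where m = N_k + 2q + 1 is the number of edges of G_{q,k}. In particular, for every step size s > 0, the normalization correction term (s/m)·Σ_{h ∈ E} C_{G_{q,k}}(h) of the normalized Ricci flow is at most −(3/10)·s. (This is the corrected, rigorous form of the concluding estimate in the proof of the paper's Theorem 1, which asserts that the average Ollivier–Ricci curvature of G_n is bounded away from 0 by a negative constant as n → ∞.) -/

import Mathlib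

/-- Earth Mover's Distance between two distributions `μ ν : V → ℝ` w.r.t. a
cost function `d : V → V → ℝ`: the minimum (infimum) of the total transport cost
over all feasible transport plans. -/
noncomputable def EMD {V : Type} (d : V → V → ℝ) (μ ν : V → ℝ) : ℝ :=
  sInf { c : ℝ | ∃ z : V → V → ℝ,
    (∀ u v, 0 ≤ z u v) ∧ (∀ u, ∑ᶠ v, z u v = μ u) ∧ (∀ v, ∑ᶠ u, z u v = ν v) ∧
    c = ∑ᶠ u, ∑ᶠ v, d u v * z u v }

/-- The degree of a vertex: the number of its neighbours. -/
noncomputable def degC {V : Type} (G : SimpleGraph V) (u : V) : ℕ :=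
  Nat.card {x | G.Adj u x}

open Classical in
/-- The uniform probability distribution on the closed neighbourhood of `u`. -/
noncomputable def Pdist {V : Type} (G : SimpleGraph V) (u : V) : V → ℝ :=
  fun w => if w = u ∨ G.Adj u w then ((degC G u : ℝ) + 1)⁻¹ else 0

/-- The graph distance, as a real-valued cost function. -/
noncomputable def gdist {V : Type} (G : SimpleGraph V) : V → V → ℝ :=
  fun a b => (G.dist a b : ℝ)

/-- The total variation distance between the closed-neighbourhood distributions of `u`, `v`. -/
noncomputable def tvd {V : Type} (G : SimpleGraph V) (u v : V) : ℝ :=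
  (1 / 2) * ∑ᶠ w, |Pdist G u w - Pdist G v w|

/-- The Ollivier–Ricci curvature of the (ordered) pair `u v`. -/
noncomputable def ricci {V : Type} (G : SimpleGraph V) (u v : V) : ℝ :=
  1 - EMD (gdist G) (Pdist G u) (Pdist G v)

lemma EMD_comm {V : Type} [Finite V] (d : V → V → ℝ) (hd : ∀ a b, d a b = d b a)
    (μ ν : V → ℝ) : EMD d μ ν = EMD d ν μ := by
  cases nonempty_fintype V
  unfold EMD
  congr 1
  ext c
  simp only [Set.mem_setOf_eq]
  constructor <;> rintro ⟨z, h0, h1, h2, rfl⟩ <;>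
    refine ⟨fun a b => z b a, fun a b => h0 b a, h2, h1, ?_⟩ <;>
    · simp only [finsum_eq_sum_of_fintype]
      rw [Finset.sum_comm]
      exact Finset.sum_congr rfl fun a _ => Finset.sum_congr rfl fun b _ => by rw [hd]

/-- The Ollivier–Ricci curvature as a function on edges (elements of `Sym2 V`). -/
noncomputable def ricciEdge {V : Type} [Finite V] (G : SimpleGraph V) : Sym2 V → ℝ :=
  Sym2.lift ⟨fun u v => ricci G u v, fun u v => by
    show ricci G u v = ricci G v u
    unfold ricci
    rw [EMD_comm (gdist G) (fun a b => by unfold gdist; rw [SimpleGraph.dist_comm])]⟩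

/-- Vertices of the complete 10-ary tree of depth `k`: lists over `Fin 10` of length
at most `k`, recording the (reversed) path from the root `[]`. -/
def TreeVert (k : ℕ) : Type := { l : List (Fin 10) // l.length ≤ k }

instance (k : ℕ) : DecidableEq (TreeVert k) :=
  inferInstanceAs (DecidableEq { l : List (Fin 10) // l.length ≤ k })

instance (k : ℕ) : Fintype (TreeVert k) :=
  Fintype.ofSurjective
    (fun x : Σ j : Fin (k + 1), List.Vector (Fin 10) j =>
      (⟨x.2.1, by have h1 := x.2.2; have h2 := x.1.isLt; omega⟩ : TreeVert k))
    (fun y => ⟨⟨⟨y.1.length, Nat.lt_succ_of_le y.2⟩, ⟨y.1, rfl⟩⟩, Subtype.ext rfl⟩)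

/-- The root of the tree. -/
def treeRoot (k : ℕ) : TreeVert k := ⟨[], by simp⟩

/-- The parent of a tree vertex (the root is mapped to itself). -/
def treeParent {k : ℕ} (x : TreeVert k) : TreeVert k :=
  ⟨x.1.tail, by have h1 := x.2; have h2 : x.1.tail.length = x.1.length - 1 := List.length_tail; omega⟩

/-- The vertex set of the graph `G_{q,k}`: the two special vertices `s`, `t`
(encoded as `Fin 2`), the vertices `p_1, …, p_q`, and the tree vertices. -/
abbrev GVert (q k : ℕ) : Type := (Fin 2 ⊕ Fin q) ⊕ TreeVert k

def vS (q k : ℕ) : GVert q k := Sum.inl (Sum.inl 0)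
def vT (q k : ℕ) : GVert q k := Sum.inl (Sum.inl 1)
def vP (q k : ℕ) (i : Fin q) : GVert q k := Sum.inl (Sum.inr i)
def vTr (q k : ℕ) (x : TreeVert k) : GVert q k := Sum.inr x

/-- Base adjacency relation generating the edges of `G_{q,k}`: the edge `{s,t}`,
the edges `{p_i, s}` and `{p_i, t}`, the bridge `{t, r_1}` to the root of the tree,
and the parent-child tree edges. -/
def gadjBase (q k : ℕ) : GVert q k → GVert q k → Prop := fun x y =>
  (x = vS q k ∧ y = vT q k) ∨
  (∃ i : Fin q, x = vP q k i ∧ (y = vS q k ∨ y = vT q k)) ∨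
  (x = vT q k ∧ y = vTr q k (treeRoot k)) ∨
  (∃ u v : TreeVert k, x = vTr q k u ∧ y = vTr q k v ∧ ∃ a : Fin 10, u.1 = a :: v.1)

/-- The graph `G_{q,k}` from the proof of the paper's Theorem 1
(with `q` playing the role of `√n`). -/
def Gqk (q k : ℕ) : SimpleGraph (GVert q k) := SimpleGraph.fromRel (gadjBase q k)

/-- `N_k = (10^(k+1) - 1)/9`, the number of vertices of the complete 10-ary tree of depth `k`. -/
def Nk (k : ℕ) : ℕ := (10 ^ (k + 1) - 1) / 9

/-!
Curvature is bounded above through weak Kantorovich duality: if `f` changes by at most `1`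
along every edge, then `EMD(P_u, P_v) ≥ 𝔼_{P_u} f - 𝔼_{P_v} f`. For the edge joining a
non-root tree vertex `x` to its parent, take `f` equal to `2` at `x`, `3` strictly below `x`,
`1` at the parent and `0` elsewhere. Its mean over the closed neighbourhood of the parent is
`3/12 = 1/4`, and over that of `x` it is `3/2` if `x` is a leaf and `33/12` otherwise, so
leaf edges have curvature at most `-1/4` and the other tree edges at most `-3/2`. The
remaining `2q + 2` edges contribute at most `1` each. Since at most `10^k ≈ (9/10) N_k` tree
edges end in a leaf and `q ≤ 10^k / 100`, the total is at most `-(3/10) m`.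
-/

open Finset

section Transport

variable {V : Type}

theorem EMD_nonneg {d : V → V → ℝ} (hd : ∀ a b, 0 ≤ d a b) (μ ν : V → ℝ) : 0 ≤ EMD d μ ν :=
  Real.sInf_nonneg <| by
    rintro _ ⟨z, hz, -, -, rfl⟩
    exact finsum_nonneg fun u => finsum_nonneg fun v => mul_nonneg (hd u v) (hz u v)

theorem sub_le_EMD [Fintype V] {d : V → V → ℝ} {μ ν : V → ℝ} (f : V → ℝ)
    (hμ : ∀ a, 0 ≤ μ a) (hν : ∀ a, 0 ≤ ν a) (hμ1 : ∑ a, μ a = 1) (hν1 : ∑ a, ν a = 1)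
    (hf : ∀ a b, f a - f b ≤ d a b) :
    ∑ a, f a * μ a - ∑ b, f b * ν b ≤ EMD d μ ν := by
  refine le_csInf ⟨_, fun a b => μ a * ν b, fun a b => mul_nonneg (hμ a) (hν b),
    fun a => ?_, fun b => ?_, rfl⟩ ?_
  · rw [finsum_eq_sum_of_fintype, ← mul_sum, hν1, mul_one]
  · rw [finsum_eq_sum_of_fintype, ← sum_mul, hμ1, one_mul]
  rintro _ ⟨z, hz, hzμ, hzν, rfl⟩
  simp only [finsum_eq_sum_of_fintype] at hzμ hzν ⊢
  calc ∑ a, f a * μ a - ∑ b, f b * ν b = ∑ a, ∑ b, (f a - f b) * z a b := by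
        simp only [← hzμ, ← hzν, mul_sum, sub_mul, sum_sub_distrib]
        rw [sum_comm (f := fun a b => f b * z a b)]
    _ ≤ ∑ a, ∑ b, d a b * z a b := by
        gcongr with a _ b _
        · exact hz a b
        · exact hf a b

theorem SimpleGraph.Connected.sub_le_dist {G : SimpleGraph V} (hG : G.Connected) {f : V → ℝ}
    (hf : ∀ a b, G.Adj a b → f a - f b ≤ 1) (a b : V) : f a - f b ≤ G.dist a b := by
  have walk_bound : ∀ {a b : V} (p : G.Walk a b), f a - f b ≤ p.length := by
    intro a b p
    induction p with
    | nil => simp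
    | cons h p ih =>
      rw [SimpleGraph.Walk.length_cons, Nat.cast_succ]
      linarith [hf _ _ h]
  obtain ⟨p, hp⟩ := hG.exists_walk_length_eq_dist a b
  exact hp ▸ walk_bound p

end Transport

section ClosedNeighbourhood

theorem Pdist_nonneg {V : Type} (G : SimpleGraph V) (u w : V) : 0 ≤ Pdist G u w := by
  unfold Pdist; split <;> positivity

variable {V : Type} {G : SimpleGraph V} {u : V} {S : Finset V}

theorem degC_eq_card (hS : ∀ w, G.Adj u w ↔ w ∈ S) : degC G u = #S := by
  rw [degC, show {x | G.Adj u x} = (S : Set V) from Set.ext hS, Nat.card_coe_set_eq,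
    Set.ncard_coe_finset]

theorem sum_mul_Pdist [Fintype V] [DecidableEq V] (hS : ∀ w, G.Adj u w ↔ w ∈ S) (g : V → ℝ) :
    ∑ w, g w * Pdist G u w = (g u + ∑ w ∈ S, g w) / (#S + 1) := by
  have hu : u ∉ S := fun h => G.loopless.irrefl u ((hS u).2 h)
  have hP : ∀ w, g w * Pdist G u w = if w ∈ insert u S then g w / (#S + 1) else 0 := by
    intro w
    simp only [Pdist, degC_eq_card hS, mem_insert, hS]
    split_ifs <;> simp [div_eq_mul_inv]
  rw [sum_congr rfl fun w _ => hP w, sum_ite_mem, univ_inter, sum_insert hu, ← sum_div, add_div]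

theorem sum_Pdist [Fintype V] [DecidableEq V] (hS : ∀ w, G.Adj u w ↔ w ∈ S) :
    ∑ w, Pdist G u w = 1 := by
  simpa [add_comm, div_self (by positivity : (#S : ℝ) + 1 ≠ 0)] using sum_mul_Pdist hS 1

end ClosedNeighbourhood

theorem ricciEdge_mk {V : Type} [Finite V] (G : SimpleGraph V) (u v : V) :
    ricciEdge G s(u, v) = ricci G u v := rfl

theorem ricci_le_one {V : Type} (G : SimpleGraph V) (u v : V) : ricci G u v ≤ 1 := by
  have := EMD_nonneg (d := gdist G) (fun a b => Nat.cast_nonneg _) (Pdist G u) (Pdist G v)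
  rw [ricci]
  linarith

theorem ricci_le_of_lipschitz {V : Type} [Fintype V] [DecidableEq V] {G : SimpleGraph V}
    (hG : G.Connected) {u v : V} {Su Sv : Finset V}
    (hSu : ∀ w, G.Adj u w ↔ w ∈ Su) (hSv : ∀ w, G.Adj v w ↔ w ∈ Sv) (f : V → ℝ)
    (hf : ∀ a b, G.Adj a b → f a - f b ≤ 1) :
    ricci G u v ≤
      1 - ((f u + ∑ w ∈ Su, f w) / (#Su + 1) - (f v + ∑ w ∈ Sv, f w) / (#Sv + 1)) := by
  have := sub_le_EMD (d := gdist G) f (Pdist_nonneg G u) (Pdist_nonneg G v) (sum_Pdist hSu)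
    (sum_Pdist hSv) (hG.sub_le_dist hf)
  rw [sum_mul_Pdist hSu, sum_mul_Pdist hSv] at this
  rw [ricci]
  linarith

section Gqk

variable {q k : ℕ} {x y : TreeVert k}

@[ext] theorem TreeVert.ext (h : x.1 = y.1) : x = y := Subtype.ext h

theorem eq_treeRoot_iff : x = treeRoot k ↔ x.1 = [] := TreeVert.ext_iff

theorem vTr_injective : Function.Injective (vTr q k) := Sum.inr_injective

@[simp] theorem vTr_inj : vTr q k x = vTr q k y ↔ x = y := vTr_injective.eq_iff

theorem length_treeParent (x : TreeVert k) : (treeParent x).1.length = x.1.length - 1 :=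
  List.length_tail

theorem exists_cons_eq_iff : (∃ a, x.1 = a :: y.1) ↔ x.1 ≠ [] ∧ y = treeParent x := by
  constructor
  · rintro ⟨a, h⟩
    exact ⟨by simp [h], TreeVert.ext (by simp [treeParent, h])⟩
  · rintro ⟨hx, rfl⟩
    exact ⟨x.1.head hx, (List.cons_head_tail hx).symm⟩

def upVert (q : ℕ) (x : TreeVert k) : GVert q k :=
  if x.1 = [] then vT q k else vTr q k (treeParent x)

def childVert (x : TreeVert k) (hx : x.1.length < k) (a : Fin 10) : TreeVert k :=
  ⟨a :: x.1, by simpa using hx⟩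

theorem childVert_injective (hx : x.1.length < k) : Function.Injective (childVert x hx) :=
  fun a b h => by simpa [childVert] using congrArg (·.1) h

def childFinset (q : ℕ) (x : TreeVert k) (hx : x.1.length < k) : Finset (GVert q k) :=
  univ.image fun a => vTr q k (childVert x hx a)

theorem mem_childFinset {hx : x.1.length < k} {w : GVert q k} :
    w ∈ childFinset q x hx ↔ ∃ y, w = vTr q k y ∧ ∃ a, y.1 = a :: x.1 := by
  simp only [childFinset, mem_image, mem_univ, true_and]
  constructor
  · rintro ⟨a, rfl⟩
    exact ⟨_, rfl, a, rfl⟩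
  · rintro ⟨y, rfl, a, hy⟩
    exact ⟨a, vTr_inj.2 (TreeVert.ext hy.symm)⟩

theorem Gqk_adj_vTr_vTr :
    (Gqk q k).Adj (vTr q k x) (vTr q k y) ↔ (∃ a, x.1 = a :: y.1) ∨ ∃ a, y.1 = a :: x.1 := by
  have hne : ((∃ a, x.1 = a :: y.1) ∨ ∃ a, y.1 = a :: x.1) → x ≠ y := by
    rintro (⟨a, h⟩ | ⟨a, h⟩) rfl <;> simp at h
  simpa [Gqk, gadjBase, vS, vT, vP, vTr] using hne

theorem Gqk_adj_vTr_inl {w : Fin 2 ⊕ Fin q} :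
    (Gqk q k).Adj (vTr q k x) (Sum.inl w) ↔ Sum.inl w = vT q k ∧ x.1 = [] := by
  simp [Gqk, gadjBase, vS, vT, vP, vTr, eq_treeRoot_iff]

theorem Gqk_adj_vTr {w : GVert q k} :
    (Gqk q k).Adj (vTr q k x) w ↔ w = upVert q x ∨ ∃ y, w = vTr q k y ∧ ∃ a, y.1 = a :: x.1 := by
  cases w with
  | inl w =>
    rw [Gqk_adj_vTr_inl]
    by_cases hx : x.1 = [] <;> simp [upVert, hx, eq_comm, vTr]
  | inr y =>
    refine (Gqk_adj_vTr_vTr (y := y)).trans ?_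
    by_cases hx : x.1 = [] <;> simp [exists_cons_eq_iff, upVert, hx, vTr, vT]

theorem upVert_treeRoot : upVert q (treeRoot k) = vT q k := if_pos rfl

theorem upVert_of_ne_nil (hx : x.1 ≠ []) : upVert q x = vTr q k (treeParent x) := if_neg hx

theorem upVert_eq_vTr_iff : upVert q x = vTr q k y ↔ x.1 ≠ [] ∧ y = treeParent x := by
  by_cases hx : x.1 = [] <;> simp [upVert, hx, vT, vTr, eq_comm]

theorem Gqk_adj_upVert (x : TreeVert k) : (Gqk q k).Adj (vTr q k x) (upVert q x) :=
  Gqk_adj_vTr.2 (Or.inl rfl)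

theorem Gqk_adj_iff_of_length_eq (hx : x.1.length = k) (w : GVert q k) :
    (Gqk q k).Adj (vTr q k x) w ↔ w ∈ ({upVert q x} : Finset (GVert q k)) := by
  rw [Gqk_adj_vTr, mem_singleton, or_iff_left]
  rintro ⟨y, -, a, hy⟩
  have := y.2
  simp [hy, hx] at this

theorem Gqk_adj_iff_of_length_lt (hx : x.1.length < k) (w : GVert q k) :
    (Gqk q k).Adj (vTr q k x) w ↔ w ∈ insert (upVert q x) (childFinset q x hx) := by
  rw [Gqk_adj_vTr, mem_insert, mem_childFinset]

theorem sum_childFinset (hx : x.1.length < k) (g : GVert q k → ℝ) :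
    ∑ w ∈ childFinset q x hx, g w = ∑ a, g (vTr q k (childVert x hx a)) :=
  sum_image fun _ _ _ _ h => childVert_injective hx (vTr_inj.1 h)

theorem card_childFinset (hx : x.1.length < k) : #(childFinset q x hx) = 10 := by
  rw [childFinset, card_image_of_injective _ fun _ _ h => childVert_injective hx (vTr_inj.1 h),
    card_univ, Fintype.card_fin]

theorem upVert_notMem_childFinset (hx : x.1.length < k) : upVert q x ∉ childFinset q x hx := by
  rw [mem_childFinset]
  rintro ⟨y, hy, a, hya⟩
  obtain ⟨-, rfl⟩ := upVert_eq_vTr_iff.1 hy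
  have := congrArg List.length hya
  simp [length_treeParent] at this

theorem Gqk_adj_vS_vT : (Gqk q k).Adj (vS q k) (vT q k) := by
  simp [Gqk, gadjBase, vS, vT]

theorem Gqk_adj_vP (i : Fin q) (j : Fin 2) : (Gqk q k).Adj (vP q k i) (Sum.inl (Sum.inl j)) := by
  fin_cases j <;> simp [Gqk, gadjBase, vP, vS, vT]

theorem reachable_vT_vTr (x : TreeVert k) : (Gqk q k).Reachable (vT q k) (vTr q k x) := by
  by_cases hx : x.1 = []
  · rw [eq_treeRoot_iff.2 hx]
    exact (upVert_treeRoot (q := q) ▸ Gqk_adj_upVert (treeRoot k)).reachable.symm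
  · exact (reachable_vT_vTr (treeParent x)).trans
      (upVert_of_ne_nil hx ▸ Gqk_adj_upVert (q := q) x).reachable.symm
termination_by x.1.length
decreasing_by
  rw [length_treeParent]
  have := List.length_pos_iff.2 hx
  omega

theorem Gqk_connected : (Gqk q k).Connected := by
  have hT : ∀ w, (Gqk q k).Reachable (vT q k) w := by
    rintro ((j | i) | x)
    · fin_cases j
      · exact Gqk_adj_vS_vT.reachable.symm
      · rfl
    · exact (Gqk_adj_vP i 1).reachable.symm
    · exact reachable_vT_vTr x
  exact ⟨fun a b => (hT a).symm.trans (hT b)⟩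

end Gqk

section BranchPotential

variable {q k : ℕ} {x y : TreeVert k}

noncomputable def branchPotential (q : ℕ) (x : TreeVert k) : GVert q k → ℝ
  | Sum.inl _ => 0
  | Sum.inr y => if x.1 <:+ y.1 then (if y = x then 2 else 3) else if y = treeParent x then 1 else 0

@[simp] theorem branchPotential_inl (w : Fin 2 ⊕ Fin q) :
    branchPotential q x (Sum.inl w) = 0 := rfl

theorem branchPotential_vTr : branchPotential q x (vTr q k y) =
    if x.1 <:+ y.1 then (if y = x then 2 else 3) else if y = treeParent x then 1 else 0 := rfl

theorem branchPotential_of_length_le (hy : y.1.length ≤ x.1.length) :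
    branchPotential q x (vTr q k y) = if y = x then 2 else if y = treeParent x then 1 else 0 := by
  by_cases hxy : x.1 <:+ y.1
  · obtain rfl : y = x := TreeVert.ext (hxy.eq_of_length (le_antisymm hxy.length_le hy)).symm
    simp [branchPotential_vTr]
  · have hne : y ≠ x := by rintro rfl; exact hxy List.suffix_rfl
    simp [branchPotential_vTr, hxy, hne]

theorem branchPotential_self : branchPotential q x (vTr q k x) = 2 := by
  simp [branchPotential_vTr]

theorem branchPotential_treeParent (hx : x.1 ≠ []) :
    branchPotential q x (vTr q k (treeParent x)) = 1 := by
  have hlt : (treeParent x).1.length < x.1.length := by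
    rw [length_treeParent]; have := List.length_pos_iff.2 hx; omega
  rw [branchPotential_of_length_le hlt.le, if_neg (fun h => by simp [h] at hlt), if_pos rfl]

theorem branchPotential_of_cons {a : Fin 10} (h : y.1 = a :: x.1) :
    branchPotential q x (vTr q k y) = 3 := by
  have hne : y ≠ x := by rintro rfl; simp at h
  simp [branchPotential_vTr, h, hne, List.suffix_cons]

theorem branchPotential_upVert (hx : x.1 ≠ []) : branchPotential q x (upVert q x) = 1 := by
  rw [upVert_of_ne_nil hx, branchPotential_treeParent hx]

theorem branchPotential_upVert_treeParent (x : TreeVert k) :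
    branchPotential q x (upVert q (treeParent x)) = 0 := by
  by_cases hp : (treeParent x).1 = []
  · rw [eq_treeRoot_iff.2 hp, upVert_treeRoot]
    rfl
  · have hlen := length_treeParent (treeParent x)
    have hlen' := length_treeParent x
    have := List.length_pos_iff.2 hp
    rw [upVert_of_ne_nil hp, branchPotential_of_length_le (by omega), if_neg, if_neg] <;>
      rintro h <;> simp [h] at hlen <;> omega

theorem sum_branchPotential_childFinset (hx : x.1.length < k) :
    ∑ w ∈ childFinset q x hx, branchPotential q x w = 30 := by
  rw [sum_childFinset, sum_congr rfl fun a _ => branchPotential_of_cons (a := a) rfl]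
  norm_num

theorem childVert_treeParent_eq_iff (hx : x.1 ≠ []) {hp : (treeParent x).1.length < k}
    {a : Fin 10} : childVert (treeParent x) hp a = x ↔ a = x.1.head hx := by
  have key : ∀ (l : List (Fin 10)) (hl : l ≠ []), a :: l.tail = l ↔ a = l.head hl := by
    rintro (_ | ⟨b, l⟩) hl
    · exact absurd rfl hl
    · simp
  exact TreeVert.ext_iff.trans (key x.1 hx)

theorem sum_branchPotential_childFinset_treeParent (hx : x.1 ≠ [])
    (hp : (treeParent x).1.length < k) :
    ∑ w ∈ childFinset q (treeParent x) hp, branchPotential q x w = 2 := by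
  have hlen : (treeParent x).1.length + 1 = x.1.length := by
    rw [length_treeParent]; have := List.length_pos_iff.2 hx; omega
  have hsibling : ∀ a, branchPotential q x (vTr q k (childVert (treeParent x) hp a)) =
      if a = x.1.head hx then 2 else 0 := by
    intro a
    rw [branchPotential_of_length_le (by simp [childVert, ← hlen])]
    by_cases ha : a = x.1.head hx
    · rw [if_pos ((childVert_treeParent_eq_iff hx).2 ha), if_pos ha]
    · rw [if_neg (mt (childVert_treeParent_eq_iff hx).1 ha), if_neg ha,
        if_neg (fun h => by simpa [childVert] using congrArg (·.1.length) h)]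
  rw [sum_childFinset, sum_congr rfl fun a _ => hsibling a]
  simp

theorem abs_branchPotential_sub_of_cons {u v : TreeVert k} {c : Fin 10} (huv : u.1 = c :: v.1) :
    |branchPotential q x (vTr q k u) - branchPotential q x (vTr q k v)| ≤ 1 := by
  by_cases hv : x.1 <:+ v.1
  · have hu : x.1 <:+ u.1 := huv ▸ hv.trans (List.suffix_cons c v.1)
    have hux : u ≠ x := by rintro rfl; have := hv.length_le; simp [huv] at this
    simp only [branchPotential_vTr, hu, hv, hux, if_true, if_false]
    split_ifs <;> norm_num
  by_cases hu : x.1 <:+ u.1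
  · obtain rfl : u = x := by
      rw [huv, List.suffix_cons_iff, ← huv] at hu
      exact TreeVert.ext (hu.resolve_right hv).symm
    obtain ⟨hx, rfl⟩ := exists_cons_eq_iff.1 ⟨c, huv⟩
    rw [branchPotential_self, branchPotential_treeParent hx]
    norm_num
  · simp only [branchPotential_vTr, hu, hv, if_false]
    split_ifs <;> norm_num

theorem abs_branchPotential_sub_le_one_of_gadjBase (hx : x.1 ≠ []) {a b : GVert q k}
    (h : gadjBase q k a b) : |branchPotential q x a - branchPotential q x b| ≤ 1 := by
  rcases h with ⟨rfl, rfl⟩ | ⟨i, rfl, rfl | rfl⟩ | ⟨rfl, rfl⟩ | ⟨u, v, rfl, rfl, c, huv⟩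
  · simp [vS, vT]
  · simp [vP, vS]
  · simp [vP, vT]
  · have hroot : treeRoot k ≠ x := fun h => hx (h ▸ rfl)
    rw [show vT q k = Sum.inl (Sum.inl 1) from rfl, branchPotential_inl,
      branchPotential_of_length_le (by simp [treeRoot]), if_neg hroot]
    split_ifs <;> norm_num
  · exact abs_branchPotential_sub_of_cons huv

theorem branchPotential_sub_le_one (hx : x.1 ≠ []) {a b : GVert q k} (hab : (Gqk q k).Adj a b) :
    branchPotential q x a - branchPotential q x b ≤ 1 := by
  rw [Gqk, SimpleGraph.fromRel_adj] at hab
  obtain ⟨-, h | h⟩ := hab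
  · exact (abs_le.1 (abs_branchPotential_sub_le_one_of_gadjBase hx h)).2
  · linarith [(abs_le.1 (abs_branchPotential_sub_le_one_of_gadjBase hx h)).1]

end BranchPotential

section Curvature

variable {q k : ℕ} {x : TreeVert k}

theorem ricci_treeParent_le (hx : x.1 ≠ []) {S : Finset (GVert q k)}
    (hS : ∀ w, (Gqk q k).Adj (vTr q k x) w ↔ w ∈ S) :
    ricci (Gqk q k) (vTr q k x) (vTr q k (treeParent x)) ≤
      1 - ((2 + ∑ w ∈ S, branchPotential q x w) / (#S + 1) - 1 / 4) := by
  have hp : (treeParent x).1.length < k := by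
    have := x.2
    have := List.length_pos_iff.2 hx
    rw [length_treeParent]
    omega
  have h := ricci_le_of_lipschitz Gqk_connected hS (Gqk_adj_iff_of_length_lt hp) _
    fun _ _ => branchPotential_sub_le_one hx
  rw [branchPotential_self, branchPotential_treeParent hx,
    sum_insert (upVert_notMem_childFinset hp),
    card_insert_of_notMem (upVert_notMem_childFinset hp), card_childFinset,
    branchPotential_upVert_treeParent, sum_branchPotential_childFinset_treeParent hx] at h
  convert h using 3
  norm_num

theorem ricci_upVert_le_of_length_eq (hx : x.1 ≠ []) (hk : x.1.length = k) :
    ricci (Gqk q k) (vTr q k x) (upVert q x) ≤ -1 / 4 := by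
  have h := ricci_treeParent_le hx (Gqk_adj_iff_of_length_eq (q := q) hk)
  rw [sum_singleton, branchPotential_upVert hx, card_singleton] at h
  rw [upVert_of_ne_nil hx]
  linarith

theorem ricci_upVert_le_of_length_lt (hx : x.1 ≠ []) (hk : x.1.length < k) :
    ricci (Gqk q k) (vTr q k x) (upVert q x) ≤ -3 / 2 := by
  have h := ricci_treeParent_le hx (Gqk_adj_iff_of_length_lt (q := q) hk)
  rw [sum_insert (upVert_notMem_childFinset hk),
    card_insert_of_notMem (upVert_notMem_childFinset hk),
    card_childFinset, branchPotential_upVert hx, sum_branchPotential_childFinset] at h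
  rw [upVert_of_ne_nil hx]
  norm_num at h
  linarith

theorem ricci_upVert_le (x : TreeVert k) :
    ricci (Gqk q k) (vTr q k x) (upVert q x) ≤
      -3 / 2 + (if x.1.length = k then 5 / 4 else 0) + (if x = treeRoot k then 5 / 2 else 0) := by
  by_cases hr : x = treeRoot k
  · have := ricci_le_one (Gqk q k) (vTr q k x) (upVert q x)
    rw [if_pos hr]
    split_ifs <;> linarith
  have hx : x.1 ≠ [] := mt eq_treeRoot_iff.2 hr
  rw [if_neg hr]
  by_cases hk : x.1.length = k
  · rw [if_pos hk]
    linarith [ricci_upVert_le_of_length_eq (q := q) hx hk]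
  · rw [if_neg hk]
    linarith [ricci_upVert_le_of_length_lt (q := q) hx (lt_of_le_of_ne x.2 hk)]

end Curvature

section Counting

theorem Nk_eq_sum (k : ℕ) : Nk k = ∑ i ∈ range (k + 1), 10 ^ i :=
  (Nat.geomSum_eq (by norm_num) _).symm

theorem Nk_cast (k : ℕ) : (Nk k : ℝ) = (10 ^ (k + 1) - 1) / 9 := by
  rw [Nk_eq_sum]
  push_cast
  rw [geom_sum_eq (by norm_num)]
  norm_num

theorem card_treeVert (k : ℕ) : Fintype.card (TreeVert k) = Nk k := by
  let e : TreeVert k ≃ Σ j : Fin (k + 1), List.Vector (Fin 10) j :=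
    { toFun := fun y => ⟨⟨y.1.length, Nat.lt_succ_of_le y.2⟩, ⟨y.1, rfl⟩⟩
      invFun := fun x => ⟨x.2.1, by have h1 := x.2.2; have h2 := x.1.isLt; omega⟩
      left_inv := fun y => rfl
      right_inv := by
        rintro ⟨⟨j, hj⟩, l, hl⟩
        obtain rfl : l.length = j := hl
        rfl }
  rw [Fintype.card_congr e, Fintype.card_sigma, Nk_eq_sum, ← Fin.sum_univ_eq_sum_range]
  simp [card_vector]

theorem card_leaves_le (k : ℕ) : #{x : TreeVert k | x.1.length = k} ≤ 10 ^ k := by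
  rw [← Fintype.card_subtype]
  calc _ ≤ Fintype.card (List.Vector (Fin 10) k) :=
        Fintype.card_le_of_injective
          (fun x : {x : TreeVert k // x.1.length = k} => (⟨x.1.1, x.2⟩ : List.Vector (Fin 10) k))
          fun x y h => Subtype.ext (TreeVert.ext (by simpa using congrArg Subtype.val h))
    _ = 10 ^ k := by simp [card_vector]

end Counting

section Edges

variable {q k : ℕ}

-- The bridge `{t, r_1}` is the edge of the root `x = treeRoot k`.
def GqkEdge (q k : ℕ) : Option (Fin q × Fin 2) ⊕ TreeVert k → Sym2 (GVert q k)
  | Sum.inl none => s(vS q k, vT q k)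
  | Sum.inl (some (i, j)) => s(vP q k i, Sum.inl (Sum.inl j))
  | Sum.inr x => s(vTr q k x, upVert q x)

theorem eq_of_sym2_vTr_upVert_eq {x y : TreeVert k}
    (h : s(vTr q k x, upVert q x) = s(vTr q k y, upVert q y)) : x = y := by
  rcases Sym2.eq_iff.1 h with ⟨h, -⟩ | ⟨hxy, hyx⟩
  · exact vTr_inj.1 h
  · obtain ⟨hx, rfl⟩ := upVert_eq_vTr_iff.1 hyx
    obtain ⟨-, hp⟩ := upVert_eq_vTr_iff.1 hxy.symm
    have hlen := congrArg (·.1.length) hp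
    have hpos := List.length_pos_iff.2 hx
    simp only [length_treeParent] at hlen
    omega

theorem GqkEdge_injective : Function.Injective (GqkEdge q k) := by
  rintro ((_ | ⟨i, j⟩) | x) ((_ | ⟨i', j'⟩) | y) h
  case inr.inr => exact congrArg _ (eq_of_sym2_vTr_upVert_eq h)
  all_goals simp_all [GqkEdge, vS, vT, vP, vTr, upVert]

theorem exists_GqkEdge_eq_of_gadjBase {a b : GVert q k} (h : gadjBase q k a b) :
    ∃ e, GqkEdge q k e = s(a, b) := by
  rcases h with ⟨rfl, rfl⟩ | ⟨i, rfl, rfl | rfl⟩ | ⟨rfl, rfl⟩ | ⟨u, v, rfl, rfl, c, huv⟩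
  · exact ⟨Sum.inl none, rfl⟩
  · exact ⟨Sum.inl (some (i, 0)), rfl⟩
  · exact ⟨Sum.inl (some (i, 1)), rfl⟩
  · exact ⟨Sum.inr (treeRoot k), by rw [GqkEdge, upVert_treeRoot, Sym2.eq_swap]⟩
  · obtain ⟨hu, rfl⟩ := exists_cons_eq_iff.1 ⟨c, huv⟩
    exact ⟨Sum.inr u, by rw [GqkEdge, upVert_of_ne_nil hu]⟩

theorem range_GqkEdge : Set.range (GqkEdge q k) = (Gqk q k).edgeSet := by
  ext e
  induction e using Sym2.ind with
  | _ a b =>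
    constructor
    · rintro ⟨((_ | ⟨i, j⟩) | x), h⟩ <;> rw [← h]
      exacts [Gqk_adj_vS_vT, Gqk_adj_vP i j, Gqk_adj_upVert x]
    · intro hab
      rw [SimpleGraph.mem_edgeSet, Gqk, SimpleGraph.fromRel_adj] at hab
      obtain ⟨-, h | h⟩ := hab
      · exact exists_GqkEdge_eq_of_gadjBase h
      · exact Sym2.eq_swap (a := b) ▸ exists_GqkEdge_eq_of_gadjBase h

theorem card_edgeSet_Gqk : Nat.card (Gqk q k).edgeSet = Nk k + 2 * q + 1 := by
  rw [← range_GqkEdge, Nat.card_range_of_injective GqkEdge_injective, Nat.card_eq_fintype_card]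
  simp only [Fintype.card_sum, Fintype.card_option, Fintype.card_prod, Fintype.card_fin,
    card_treeVert]
  ring

theorem finsum_edgeSet_Gqk (g : Sym2 (GVert q k) → ℝ) :
    ∑ᶠ e ∈ (Gqk q k).edgeSet, g e = g s(vS q k, vT q k) +
      ∑ p : Fin q × Fin 2, g s(vP q k p.1, Sum.inl (Sum.inl p.2)) +
      ∑ x, g s(vTr q k x, upVert q x) := by
  rw [← range_GqkEdge, finsum_mem_range GqkEdge_injective, finsum_eq_sum_of_fintype,
    Fintype.sum_sum_type, Fintype.sum_option]
  rfl

end Edges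

section AverageCurvature

variable {q k : ℕ}

theorem sum_ricci_upVert_le :
    ∑ x : TreeVert k, ricci (Gqk q k) (vTr q k x) (upVert q x) ≤
      -3 / 2 * Nk k + 5 / 4 * 10 ^ k + 5 / 2 := by
  calc _ ≤ ∑ x : TreeVert k, (-3 / 2 + (if x.1.length = k then 5 / 4 else 0) +
          (if x = treeRoot k then 5 / 2 else 0) : ℝ) := sum_le_sum fun x _ => ricci_upVert_le x
    _ = -3 / 2 * Nk k + 5 / 4 * (#{x : TreeVert k | x.1.length = k} : ℝ) + 5 / 2 := by
        rw [sum_add_distrib, sum_add_distrib, sum_ite_eq', ← sum_filter]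
        simp only [sum_const, card_univ, card_treeVert, nsmul_eq_mul, mem_univ, if_true]
        ring
    _ ≤ _ := by
        gcongr
        exact_mod_cast card_leaves_le k

theorem finsum_ricciEdge_Gqk_le (hk : 2 ≤ k) (hq : q ≤ 10 ^ (k - 2)) :
    ∑ᶠ e ∈ (Gqk q k).edgeSet, ricciEdge (Gqk q k) e ≤ -(3 / 10) * ((Nk k + 2 * q + 1 : ℕ) : ℝ) := by
  have hspine : ∑ p : Fin q × Fin 2, ricci (Gqk q k) (vP q k p.1) (Sum.inl (Sum.inl p.2)) ≤
      2 * q := by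
    simpa [mul_comm] using sum_le_card_nsmul (univ : Finset (Fin q × Fin 2)) _ 1
      fun p _ => ricci_le_one (Gqk q k) _ _
  have hst := ricci_le_one (Gqk q k) (vS q k) (vT q k)
  have htree := sum_ricci_upVert_le (q := q) (k := k)
  have hpow : (10 : ℝ) ^ k = 100 * 10 ^ (k - 2) := by
    rw [show (100 : ℝ) = 10 ^ 2 by norm_num, ← pow_add, Nat.add_sub_cancel' hk]
  have hq' : (q : ℝ) ≤ 10 ^ (k - 2) := by exact_mod_cast hq
  have hone : (1 : ℝ) ≤ 10 ^ (k - 2) := one_le_pow₀ (by norm_num)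
  simp only [finsum_edgeSet_Gqk, ricciEdge_mk]
  push_cast
  rw [Nk_cast, pow_succ] at *
  linarith

end AverageCurvature

theorem average_curvature_negative_general (q k : ℕ) (hk : 2 ≤ k) (hq2 : q ≤ 10 ^ (k - 2)) :
    Nat.card (Gqk q k).edgeSet = Nk k + 2 * q + 1 ∧
    (1 / ((Nk k + 2 * q + 1 : ℕ) : ℝ)) *
        ∑ᶠ h ∈ (Gqk q k).edgeSet, ricciEdge (Gqk q k) h ≤ -(3 / 10) ∧
    ∀ s : ℝ, 0 < s →
      (s / ((Nk k + 2 * q + 1 : ℕ) : ℝ)) *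
          ∑ᶠ h ∈ (Gqk q k).edgeSet, ricciEdge (Gqk q k) h ≤ -(3 / 10) * s := by
  have hm : (0 : ℝ) < ((Nk k + 2 * q + 1 : ℕ) : ℝ) := by positivity
  have hscaled : ∀ s : ℝ, 0 ≤ s → (s / ((Nk k + 2 * q + 1 : ℕ) : ℝ)) *
      ∑ᶠ h ∈ (Gqk q k).edgeSet, ricciEdge (Gqk q k) h ≤ -(3 / 10) * s := fun s hs =>
    calc _ ≤ (s / ((Nk k + 2 * q + 1 : ℕ) : ℝ)) * (-(3 / 10) * ((Nk k + 2 * q + 1 : ℕ) : ℝ)) :=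
          mul_le_mul_of_nonneg_left (finsum_ricciEdge_Gqk_le hk hq2) (by positivity)
      _ = -(3 / 10) * s := by field_simp
  refine ⟨card_edgeSet_Gqk, by simpa using hscaled 1 zero_le_one, fun s hs => hscaled s hs.le⟩

/-- For all integers `k ≥ 2` and all integers `q` with
`1 ≤ q ≤ 10^(k−2)`, the graph `G_{q,k}` has `m = N_k + 2q + 1` edges and satisfies
`(1/m)·Σ_{h ∈ E} C_{G_{q,k}}(h) ≤ −3/10`; in particular, for every step size `s > 0`,
the normalization correction term `(s/m)·Σ_{h ∈ E} C_{G_{q,k}}(h)` of the normalized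
Ricci flow is at most `−(3/10)·s`. -/
theorem average_curvature_negative (q k : ℕ) (hk : 2 ≤ k) (hq1 : 1 ≤ q)
    (hq2 : q ≤ 10 ^ (k - 2)) :
    Nat.card (Gqk q k).edgeSet = Nk k + 2 * q + 1 ∧
    (1 / ((Nk k + 2 * q + 1 : ℕ) : ℝ)) *
        ∑ᶠ h ∈ (Gqk q k).edgeSet, ricciEdge (Gqk q k) h ≤ -(3 / 10) ∧
    ∀ s : ℝ, 0 < s →
      (s / ((Nk k + 2 * q + 1 : ℕ) : ℝ)) *
          ∑ᶠ h ∈ (Gqk q k).edgeSet, ricciEdge (Gqk q k) h ≤ -(3 / 10) * s :=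
  average_curvature_negative_general q k hk hq2
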